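/- Let μ(t) = p1 sin(λ1 t + θ1) + p2 sin(λ2 t + θ2) with real constants p1, p2, θ1, θ2 and nonzero reals λ1, λ2 that are rationally independent, and let K(t) = [[μ(t), 10i], [−10i, −t²]]. Consider the second-order vector equation φ'' + K(t)φ = 0, which is equivalent to the Hamiltonian system (1.1) with A(t) ≡ 0, B(t) ≡ I (the 2×2 identity) and C(t) = −K(t). If the scalar equation φ1'' + μ(t)φ1 = 0 is oscillatory, then this Hamiltonian system (and hence the vector equation φ'' + K(t)φ = 0) is oscillatory. -/

import Mathlib

open Matrix Set Complex ComplexConjugate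

noncomputable section

/- STATEMENT 13 (Example 3.1): the vector equation φ'' + K(t)φ = 0 with
   K(t) = [[μ(t), 10i], [-10i, -t²]], μ(t) = p1 sin(λ1 t + θ1) + p2 sin(λ2 t + θ2),
   viewed as the Hamiltonian system (1.1) with A ≡ 0, B ≡ I, C = -K, is
   oscillatory provided the scalar equation φ1'' + μ(t) φ1 = 0 is oscillatory. -/

abbrev Mat2 := Matrix (Fin 2) (Fin 2) ℂ

def EntryDeriv (Z : ℝ → Mat2) (D : Mat2) (t : ℝ) : Prop :=
  ∀ i j, HasDerivAt (fun s => Z s i j) (D i j) t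

def IsConjoined (t0 : ℝ) (A B C Φ Ψ : ℝ → Mat2) : Prop :=
  (∀ t, t0 ≤ t → EntryDeriv Φ (A t * Φ t + B t * Ψ t) t) ∧
  (∀ t, t0 ≤ t → EntryDeriv Ψ (C t * Φ t - (A t)ᴴ * Ψ t) t) ∧
  (∀ t, t0 ≤ t → (Φ t)ᴴ * Ψ t = (Ψ t)ᴴ * Φ t)

def SysOsc (t0 : ℝ) (A B C : ℝ → Mat2) : Prop :=
  ∀ Φ Ψ : ℝ → Mat2, IsConjoined t0 A B C Φ Ψ →
    ∀ T : ℝ, ∃ t, T ≤ t ∧ (Φ t).det = 0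

/-- The scalar equation φ'' + p φ' + q φ = 0 on [t0, ∞) is oscillatory. -/
def SecondOrderOsc (t0 : ℝ) (p q : ℝ → ℝ) : Prop :=
  ∀ φ dφ : ℝ → ℝ,
    (∀ t, t0 ≤ t → HasDerivAt φ (dφ t) t) →
    (∀ t, t0 ≤ t → HasDerivAt dφ (-(p t * dφ t + q t * φ t)) t) →
    (∃ t, t0 ≤ t ∧ φ t ≠ 0) →
    ∀ T : ℝ, ∃ t, T ≤ t ∧ φ t = 0

open Topology NNReal

/-! If `det Φ` had no zeros on `[T, ∞)`, then `W = Ψ Φ⁻¹` would be a Hermitian solution of the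
matrix Riccati equation `W' = -K - W²`, and the real part `w` of its `(0,0)` entry would satisfy
`w' + w² + μ = -|W₁₀|² ≤ 0` there. Picone's identity
`(φ φ' - w φ²)' = (φ' - w φ)² - (w' + w² + μ) φ²` then shows that a solution of `φ'' + μ φ = 0`
cannot vanish at two points `a < b` of `[T, ∞)` unless also `φ'(a) = 0`. A solution built from a
Prüfer angle, whose equation has a bounded right-hand side and hence a global solution, never has
`φ = φ' = 0`, and the oscillation of the scalar equation supplies the two zeros. -/

section BoundedODE

variable {E : Type*} [NormedAddCommGroup E] [NormedSpace ℝ E] [CompleteSpace E]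
  {v : ℝ → E → E} {K C : ℝ≥0}

theorem exists_forall_mem_Ioo_hasDerivAt_of_norm_le (hlip : ∀ t, LipschitzWith K (v t))
    (hcont : ∀ x, Continuous (v · x)) (hC : ∀ t x, ‖v t x‖ ≤ C) (t₀ : ℝ) (x₀ : E) (R : ℝ≥0) :
    ∃ γ : ℝ → E, γ t₀ = x₀ ∧ ∀ t ∈ Ioo (t₀ - R) (t₀ + R), HasDerivAt γ (v t (γ t)) t := by
  have ht₀ : t₀ ∈ Icc (t₀ - R) (t₀ + R) := ⟨by simp, by simp⟩
  have hpl : IsPicardLindelof v (⟨t₀, ht₀⟩ : Icc (t₀ - R) (t₀ + R)) x₀ (C * R) 0 C K :=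
    { lipschitzOnWith := fun t _ => (hlip t).lipschitzOnWith
      continuousOn := fun x _ => (hcont x).continuousOn
      norm_le := fun t _ x _ => hC t x
      mul_max_le := by simp }
  obtain ⟨γ, hγ₀, hγ⟩ := hpl.exists_eq_forall_mem_Icc_hasDerivWithinAt₀
  exact ⟨γ, hγ₀, fun t ht => (hγ t (Ioo_subset_Icc_self ht)).hasDerivAt (Icc_mem_nhds ht.1 ht.2)⟩

theorem exists_forall_hasDerivAt_of_norm_le (hlip : ∀ t, LipschitzWith K (v t))
    (hcont : ∀ x, Continuous (v · x)) (hC : ∀ t x, ‖v t x‖ ≤ C) (t₀ : ℝ) (x₀ : E) :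
    ∃ γ : ℝ → E, γ t₀ = x₀ ∧ ∀ t, HasDerivAt γ (v t (γ t)) t := by
  choose γ hγ₀ hγ using fun n : ℕ =>
    exists_forall_mem_Ioo_hasDerivAt_of_norm_le hlip hcont hC t₀ x₀ n
  simp only [NNReal.coe_natCast] at hγ
  have hagree : ∀ m n : ℕ, ∀ s, |s - t₀| < m → |s - t₀| < n → γ m s = γ n s := by
    intro m n s hm hn
    wlog hmn : m ≤ n generalizing m n
    · exact (this n m hn hm (le_of_not_ge hmn)).symm
    have hsub : Ioo (t₀ - m) (t₀ + m) ⊆ Ioo (t₀ - n) (t₀ + n) :=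
      Ioo_subset_Ioo (by gcongr) (by gcongr)
    have hm' := abs_sub_lt_iff.1 hm
    refine ODE_solution_unique_of_mem_Ioo (fun t _ => (hlip t).lipschitzOnWith (s := univ))
      (t₀ := t₀) ⟨by linarith, by linarith⟩ (fun t ht => ⟨hγ m t ht, trivial⟩)
      (fun t ht => ⟨hγ n t (hsub ht), trivial⟩) (by rw [hγ₀, hγ₀]) ⟨by linarith, by linarith⟩
  refine ⟨fun s => γ (⌊|s - t₀|⌋₊ + 1) s, by simp [hγ₀], fun t => ?_⟩
  have hfloor : ∀ s, |s - t₀| < ((⌊|s - t₀|⌋₊ + 1 : ℕ) : ℝ) := fun s => by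
    push_cast; exact Nat.lt_floor_add_one _
  set N := ⌊|t - t₀|⌋₊ + 1
  have hev : (fun s => γ (⌊|s - t₀|⌋₊ + 1) s) =ᶠ[𝓝 t] γ N := by
    have hopen : IsOpen {s : ℝ | |s - t₀| < N} := isOpen_lt (by fun_prop) continuous_const
    filter_upwards [hopen.mem_nhds (hfloor t)] with s hs using hagree _ _ s (hfloor s) hs
  have ht := abs_sub_lt_iff.1 (hfloor t)
  exact (hγ N t ⟨by linarith, by linarith⟩).congr_of_eventuallyEq hev

end BoundedODE

theorem exists_solution_eq_one_of_abs_le {q : ℝ → ℝ} {M : ℝ} (hq : Continuous q)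
    (hM : ∀ t, |q t| ≤ M) (t₀ : ℝ) :
    ∃ φ dφ : ℝ → ℝ, φ t₀ = 1 ∧ (∀ t, HasDerivAt φ (dφ t) t) ∧
      (∀ t, HasDerivAt dφ (-(q t * φ t)) t) ∧ ∀ t, φ t = 0 → dφ t ≠ 0 := by
  have hM0 : 0 ≤ M := (abs_nonneg _).trans (hM 0)
  have h1q : ∀ t, |1 - q t| ≤ 1 + M := fun t =>
    (abs_sub _ _).trans (by rw [abs_one]; linarith [hM t])
  -- Prüfer angle: `φ = r sin θ`, `φ' = r cos θ` with `θ' = cos² θ + q sin² θ = v t θ`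
  set v : ℝ → ℝ → ℝ := fun t θ => (1 + q t + (1 - q t) * Real.cos (2 * θ)) / 2
  have hlip : ∀ t, LipschitzWith (1 + M).toNNReal (v t) := fun t =>
    LipschitzWith.of_dist_le_mul fun x y => by
      rw [Real.coe_toNNReal _ (by linarith), Real.dist_eq, Real.dist_eq]
      calc |v t x - v t y| = |(1 - q t) * (Real.cos (2 * x) - Real.cos (2 * y)) / 2| := by
            congr 1; simp only [v]; ring
        _ = |1 - q t| * |Real.cos (2 * x) - Real.cos (2 * y)| / 2 := by
            rw [abs_div, abs_mul, abs_two]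
        _ ≤ (1 + M) * |2 * x - 2 * y| / 2 := by
            gcongr ?_ * ?_ / 2
            · exact h1q t
            · exact Real.abs_cos_sub_cos_le _ _
        _ = (1 + M) * |x - y| := by rw [← mul_sub, abs_mul, abs_two]; ring
  have hcont : ∀ θ, Continuous (v · θ) := fun θ => by fun_prop
  have hbdd : ∀ t θ, ‖v t θ‖ ≤ (1 + M).toNNReal := fun t θ => by
    rw [Real.coe_toNNReal _ (by linarith), Real.norm_eq_abs, abs_le]
    have := abs_le.1 (h1q t)
    have := abs_le.1 (hM t)
    have := Real.neg_one_le_cos (2 * θ)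
    have := Real.cos_le_one (2 * θ)
    constructor <;> simp only [v] <;> nlinarith
  obtain ⟨θ, hθ₀, hθ⟩ := exists_forall_hasDerivAt_of_norm_le hlip hcont hbdd t₀ (Real.pi / 2)
  have hθc : Continuous θ := continuous_iff_continuousAt.2 fun t => (hθ t).continuousAt
  set g : ℝ → ℝ := fun s => (1 - q s) * Real.sin (θ s) * Real.cos (θ s)
  set r : ℝ → ℝ := fun t => Real.exp (∫ s in t₀..t, g s)
  have hr : ∀ t, HasDerivAt r (r t * g t) t := fun t =>
    (Continuous.integral_hasStrictDerivAt (by fun_prop) t₀ t).hasDerivAt.exp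
  refine ⟨fun t => r t * Real.sin (θ t), fun t => r t * Real.cos (θ t), by simp [r, hθ₀],
    fun t => ?_, fun t => ?_, fun t h => ?_⟩
  · refine ((hr t).mul (hθ t).sin).congr_deriv ?_
    simp only [g, v]
    linear_combination r t * Real.cos (θ t) * (1 - q t) *
      (Real.sin_sq_add_cos_sq (θ t) + Real.cos_two_mul (θ t) / 2)
  · refine ((hr t).mul (hθ t).cos).congr_deriv ?_
    simp only [g, v]
    linear_combination -(r t * Real.sin (θ t) * (1 - q t) / 2) * Real.cos_two_mul (θ t)
  · have hs : Real.sin (θ t) = 0 := (mul_eq_zero.1 h).resolve_left (Real.exp_pos _).ne'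
    have hc : Real.cos (θ t) ≠ 0 := fun hc => by
      simpa [hs, hc] using Real.sin_sq_add_cos_sq (θ t)
    exact mul_ne_zero (Real.exp_pos _).ne' hc

theorem deriv_eq_zero_of_riccati_of_eq_zero {q w dw φ dφ : ℝ → ℝ} {a b : ℝ} (hab : a < b)
    (hφ : ∀ t ∈ Icc a b, HasDerivAt φ (dφ t) t)
    (hdφ : ∀ t ∈ Icc a b, HasDerivAt dφ (-(q t * φ t)) t)
    (hw : ∀ t ∈ Icc a b, HasDerivAt w (dw t) t)
    (hric : ∀ t ∈ Icc a b, dw t + w t ^ 2 + q t ≤ 0)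
    (ha : φ a = 0) (hb : φ b = 0) : dφ a = 0 := by
  set F : ℝ → ℝ := fun t => φ t * dφ t - w t * φ t ^ 2
  set dF : ℝ → ℝ := fun t => (dφ t - w t * φ t) ^ 2 - (dw t + w t ^ 2 + q t) * φ t ^ 2
  -- Picone's identity
  have hF : ∀ t ∈ Icc a b, HasDerivAt F (dF t) t := fun t ht =>
    (((hφ t ht).mul (hdφ t ht)).sub ((hw t ht).mul ((hφ t ht).fun_pow 2))).congr_deriv
      (by simp only [dF]; ring)
  have hdF : ∀ t ∈ Icc a b, 0 ≤ dF t := fun t ht =>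
    sub_nonneg_of_le ((mul_nonpos_of_nonpos_of_nonneg (hric t ht) (sq_nonneg _)).trans
      (sq_nonneg _))
  have hmono : MonotoneOn F (Icc a b) :=
    monotoneOn_of_hasDerivWithinAt_nonneg (convex_Icc a b)
      (HasDerivAt.continuousOn hF)
      (fun t ht => (hF t (interior_subset ht)).hasDerivWithinAt)
      (fun t ht => hdF t (interior_subset ht))
  have hFa : F a = 0 := by simp [F, ha]
  have hFb : F b = 0 := by simp [F, hb]
  have hab' : a ∈ Icc a b := left_mem_Icc.2 hab.le
  have hF0 : ∀ t ∈ Icc a b, F t = 0 := fun t ht =>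
    le_antisymm (hFb ▸ hmono ht (right_mem_Icc.2 hab.le) ht.2) (hFa ▸ hmono hab' ht ht.1)
  have hdFa : dF a = 0 :=
    (uniqueDiffOn_Icc hab a hab').eq_deriv _ (hF a hab').hasDerivWithinAt
      ((hasDerivWithinAt_const a _ 0).congr hF0 (hF0 a hab'))
  simpa [dF, ha] using hdFa

theorem hasDerivAt_mul_ringInverse {R : Type*} [NormedRing R] [NormedAlgebra ℝ R]
    [HasSummableGeomSeries R] {Φ Ψ : ℝ → R} {dΨ : R} {t : ℝ}
    (hΦ : HasDerivAt Φ (Ψ t) t) (hΨ : HasDerivAt Ψ dΨ t) (hu : IsUnit (Φ t)) :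
    HasDerivAt (fun s => Ψ s * Ring.inverse (Φ s))
      (dΨ * Ring.inverse (Φ t) - (Ψ t * Ring.inverse (Φ t)) ^ 2) t := by
  obtain ⟨u, hu⟩ := hu
  have hinv : HasDerivAt (fun s => Ring.inverse (Φ s))
      (-(Ring.inverse (Φ t) * Ψ t * Ring.inverse (Φ t))) t := by
    have := (hu ▸ hasFDerivAt_ringInverse (𝕜 := ℝ) u).comp_hasDerivAt t hΦ
    simpa [← hu, Function.comp_def] using this
  exact (hΨ.fun_mul hinv).congr_deriv (by noncomm_ring)

theorem isSelfAdjoint_mul_ringInverse {R : Type*} [Ring R] [StarRing R] {Φ Ψ : R}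
    (hc : star Φ * Ψ = star Ψ * Φ) (hu : IsUnit Φ) :
    IsSelfAdjoint (Ψ * Ring.inverse Φ) := by
  have h1 : Φ * Ring.inverse Φ = 1 := Ring.mul_inverse_cancel _ hu
  have h2 : star (Ring.inverse Φ) * star Φ = 1 := by rw [← star_mul, h1, star_one]
  calc star (Ψ * Ring.inverse Φ) = star (Ring.inverse Φ) * (star Ψ * Φ) * Ring.inverse Φ := by
        rw [star_mul, mul_assoc, mul_assoc, h1, mul_one]
    _ = star (Ring.inverse Φ) * star Φ * (Ψ * Ring.inverse Φ) := by
        rw [← hc]; noncomm_ring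
    _ = Ψ * Ring.inverse Φ := by rw [h2, one_mul]

theorem re_neg_sub_sq_apply_zero_zero {K W : Matrix (Fin 2) (Fin 2) ℂ} (hW : W.IsHermitian) :
    ((-K - W ^ 2) 0 0).re = -(K 0 0).re - (W 0 0).re ^ 2 - normSq (W 1 0) := by
  have h00 : (W 0 0).im = 0 := Complex.conj_eq_iff_im.1 (congrFun (congrFun hW 0) 0)
  have h01 : W 0 1 = conj (W 1 0) := by
    simpa using (congrFun (congrFun hW 0) 1).symm
  simp [sq, Matrix.mul_apply, Fin.sum_univ_two, h01, Complex.mul_re, h00, Complex.normSq_apply]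
  ring

section Mat2Calculus

attribute [local instance] Matrix.linftyOpNormedRing Matrix.linftyOpNormedAlgebra

theorem hasDerivAt_of_entryDeriv {Z : ℝ → Mat2} {D : Mat2} {t : ℝ} (h : EntryDeriv Z D t) :
    HasDerivAt Z D t :=
  ((Matrix.ofLinearEquiv ℝ : (Fin 2 → Fin 2 → ℂ) ≃ₗ[ℝ] Mat2).toContinuousLinearEquiv
    |>.hasFDerivAt.comp_hasDerivAt t (hasDerivAt_pi.2 fun i => hasDerivAt_pi.2 (h i)) :)

theorem HasDerivAt.matrix_apply {Z : ℝ → Mat2} {D : Mat2} {t : ℝ} (h : HasDerivAt Z D t)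
    (i j : Fin 2) : HasDerivAt (fun s => Z s i j) (D i j) t :=
  (Matrix.entryLinearMap ℝ ℂ i j).toContinuousLinearMap.hasFDerivAt.comp_hasDerivAt t h

theorem exists_riccati_of_isConjoined {t0 T : ℝ} {K Φ Ψ : ℝ → Mat2}
    (hconj : IsConjoined t0 (fun _ => 0) (fun _ => 1) (fun t => -(K t)) Φ Ψ) (hT : t0 ≤ T)
    (hdet : ∀ t, T ≤ t → (Φ t).det ≠ 0) :
    ∃ w dw : ℝ → ℝ, ∀ t, T ≤ t → HasDerivAt w (dw t) t ∧ dw t + w t ^ 2 + (K t 0 0).re ≤ 0 := by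
  obtain ⟨hΦ, hΨ, hc⟩ := hconj
  set W : ℝ → Mat2 := fun s => Ψ s * Ring.inverse (Φ s)
  refine ⟨fun s => (W s 0 0).re, fun s => ((-(K s) - W s ^ 2) 0 0).re, fun t ht => ?_⟩
  have hu : IsUnit (Φ t) := (Matrix.isUnit_iff_isUnit_det _).2 (hdet t ht).isUnit
  have hW : HasDerivAt W (-(K t) - W t ^ 2) t := by
    have hΦ' := hasDerivAt_of_entryDeriv (hΦ t (hT.trans ht))
    have hΨ' := hasDerivAt_of_entryDeriv (hΨ t (hT.trans ht))
    simp only [zero_mul, one_mul, zero_add, conjTranspose_zero, sub_zero] at hΦ' hΨ'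
    have := hasDerivAt_mul_ringInverse hΦ' hΨ' hu
    rwa [mul_assoc, Ring.mul_inverse_cancel _ hu, mul_one] at this
  have hherm : (W t).IsHermitian := isSelfAdjoint_mul_ringInverse
    (by simpa only [Matrix.star_eq_conjTranspose] using hc t (hT.trans ht)) hu
  refine ⟨Complex.reCLM.hasFDerivAt.comp_hasDerivAt t (hW.matrix_apply 0 0), ?_⟩
  show ((-(K t) - W t ^ 2) 0 0).re + (W t 0 0).re ^ 2 + (K t 0 0).re ≤ 0
  rw [re_neg_sub_sq_apply_zero_zero hherm]
  linarith [Complex.normSq_nonneg (W t 1 0)]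

end Mat2Calculus

theorem example_3_1_general
    (t0 : ℝ) (p1 p2 lam1 lam2 θ1 θ2 : ℝ)
    (μ : ℝ → ℝ)
    (hμ : ∀ t, μ t = p1 * Real.sin (lam1 * t + θ1) + p2 * Real.sin (lam2 * t + θ2))
    (K : ℝ → Mat2)
    (hK : ∀ t, K t = !![((μ t : ℝ) : ℂ), 10 * Complex.I;
                       -(10 * Complex.I), ((-(t ^ 2) : ℝ) : ℂ)])
    (hosc : SecondOrderOsc t0 (fun _ => 0) μ) :
    SysOsc t0 (fun _ => 0) (fun _ => 1) (fun t => -(K t)) := by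
  intro Φ Ψ hconj T
  by_contra! hdet
  obtain ⟨w, dw, hw⟩ := exists_riccati_of_isConjoined hconj (le_max_right T t0)
    fun t ht => hdet t ((le_max_left T t0).trans ht)
  have hμc : Continuous μ := by rw [funext hμ]; fun_prop
  have hμM : ∀ t, |μ t| ≤ |p1| + |p2| := fun t => by
    rw [hμ]
    refine (abs_add_le _ _).trans (add_le_add ?_ ?_) <;> rw [abs_mul] <;>
      exact mul_le_of_le_one_right (abs_nonneg _) (Real.abs_sin_le_one _)
  obtain ⟨φ, dφ, hφ₀, hφ, hdφ, hφ0⟩ := exists_solution_eq_one_of_abs_le hμc hμM t0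
  have hzeros := hosc φ dφ (fun t _ => hφ t) (fun t _ => by simpa using hdφ t)
    ⟨t0, le_rfl, by simp [hφ₀]⟩
  obtain ⟨a, ha, hφa⟩ := hzeros (max T t0)
  obtain ⟨b, hb, hφb⟩ := hzeros (a + 1)
  refine hφ0 a hφa (deriv_eq_zero_of_riccati_of_eq_zero (by linarith) (fun t _ => hφ t)
    (fun t _ => hdφ t) (fun t ht => (hw t (ha.trans ht.1)).1) (fun t ht => ?_) hφa hφb)
  simpa [hK] using (hw t (ha.trans ht.1)).2

theorem example_3_1
    (t0 : ℝ) (p1 p2 lam1 lam2 θ1 θ2 : ℝ)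
    (hlam1 : lam1 ≠ 0) (hlam2 : lam2 ≠ 0)
    -- λ1 and λ2 are rationally independent:
    (hindep : ∀ q1 q2 : ℚ, (q1 : ℝ) * lam1 + (q2 : ℝ) * lam2 = 0 →
      q1 = 0 ∧ q2 = 0)
    (μ : ℝ → ℝ)
    (hμ : ∀ t, μ t = p1 * Real.sin (lam1 * t + θ1) + p2 * Real.sin (lam2 * t + θ2))
    (K : ℝ → Mat2)
    (hK : ∀ t, K t = !![((μ t : ℝ) : ℂ), 10 * Complex.I;
                       -(10 * Complex.I), ((-(t ^ 2) : ℝ) : ℂ)])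
    (hosc : SecondOrderOsc t0 (fun _ => 0) μ) :
    SysOsc t0 (fun _ => 0) (fun _ => 1) (fun t => -(K t)) :=
  example_3_1_general t0 p1 p2 lam1 lam2 θ1 θ2 μ hμ K hK hosc
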